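/- arXiv:0907.4151 — 2 statements merged into one kernel-verified Lean document; each statement's English description precedes it below -/
import Mathlib

section
/- Let R be a commutative ring of prime characteristic p, and q a power of p. For any two ideals I, J ⊆ R which are generated by regular sequences (or more specifically, in a polynomial ring over a field), the Frobenius power distributes over intersection: (I ∩ J)^{[q]} = I^{[q]} ∩ J^{[q]}. -/
/-- The Frobenius power of an ideal: the ideal generated by `q`-th powers of
its elements. -/
def frobeniusPower {R : Type*} [CommRing R] (q : ℕ) (I : Ideal R) : Ideal R :=
  Ideal.span ((fun x => x ^ q) '' (I : Set R))

section Key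

variable {R : Type*} [CommRing R] (q : ℕ)

/-- If an element lies in the Frobenius power of `I`, then all of its
"Frobenius coordinates" (with respect to a semilinear coordinate system) lie in `I`. -/
theorem coord_mem {ι : Type*} (cF : R →+ (ι →₀ R))
    (hsmul : ∀ g f : R, cF (g ^ q * f) = g • cF f)
    (I : Ideal R) {f : R} (hf : f ∈ frobeniusPower q I) (t : ι) :
    cF f t ∈ I := by
  rw [frobeniusPower] at hf
  obtain ⟨c, hc, rfl⟩ := Submodule.mem_span_set.mp hf
  rw [Finsupp.sum, map_sum, Finsupp.finset_sum_apply]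
  refine Ideal.sum_mem _ fun m hm => ?_
  obtain ⟨a, haI, rfl⟩ := hc hm
  rw [smul_eq_mul, mul_comm, hsmul, Finsupp.smul_apply, smul_eq_mul]
  exact Ideal.mul_mem_right _ _ haI

/-- Generic key lemma: a Frobenius-semilinear coordinate system with a
reconstruction formula forces Frobenius powers to distribute over `⊓`. -/
theorem frob_inf_of_dual {ι : Type*} (b : ι → R) (cF : R →+ (ι →₀ R))
    (hsmul : ∀ g f : R, cF (g ^ q * f) = g • cF f)
    (hrec : ∀ f : R, ((cF f).sum fun t r => r ^ q * b t) = f)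
    (I J : Ideal R) :
    frobeniusPower q (I ⊓ J) = frobeniusPower q I ⊓ frobeniusPower q J := by
  refine le_antisymm (le_inf ?_ ?_) ?_
  · exact Ideal.span_mono (Set.image_mono fun x hx => hx.1)
  · exact Ideal.span_mono (Set.image_mono fun x hx => hx.2)
  · intro f hf
    obtain ⟨hfI, hfJ⟩ := Submodule.mem_inf.mp hf
    conv_rhs => rw [← hrec f]
    rw [Finsupp.sum]
    refine Ideal.sum_mem _ fun t ht => ?_
    refine Ideal.mul_mem_right _ _ (Ideal.subset_span ?_)
    exact ⟨cF f t, Submodule.mem_inf.mpr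
      ⟨coord_mem q cF hsmul I hfI t, coord_mem q cF hsmul J hfJ t⟩, rfl⟩

end Key

section Build

open MvPolynomial

variable {k : Type*} [Field k] (q : ℕ) (hq0 : q ≠ 0)
  (hk : ∀ x y : k, (x + y) ^ q = x ^ q + y ^ q)

/-- The `q`-power Frobenius as a ring hom. -/
noncomputable def sigk : k →+* k where
  toFun x := x ^ q
  map_one' := one_pow q
  map_mul' x y := mul_pow x y q
  map_zero' := zero_pow hq0
  map_add' := hk

include hq0 hk in
theorem powq_inj {a b : k} (h : a ^ q = b ^ q) : a = b :=
  (sigk q hq0 hk).injective h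

/-- The subfield of `q`-th powers. -/
noncomputable def AF : Subfield k := (sigk q hq0 hk).fieldRange

/-- A basis of `k` over the subfield of `q`-th powers. -/
noncomputable def basF :
    Module.Basis (Module.Basis.ofVectorSpaceIndex (AF q hq0 hk) k) (AF q hq0 hk) k :=
  Module.Basis.ofVectorSpace _ _

/-- The index type for the basis. -/
noncomputable abbrev BI := Module.Basis.ofVectorSpaceIndex (AF q hq0 hk) k

/-- The `q`-th root map on the subfield of `q`-th powers. -/
noncomputable def rhoF (t : AF q hq0 hk) : k :=
  (RingHom.mem_fieldRange.mp t.2).choose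

theorem rhoF_spec (t : AF q hq0 hk) : (rhoF q hq0 hk t) ^ q = (t : k) :=
  (RingHom.mem_fieldRange.mp t.2).choose_spec

/-- Coordinate functions on `k`, semilinear with respect to `q`-th powers. -/
noncomputable def EF (i : BI q hq0 hk) (u : k) : k :=
  rhoF q hq0 hk ((basF q hq0 hk).repr u i)

theorem EF_pow (i : BI q hq0 hk) (u : k) :
    (EF q hq0 hk i u) ^ q = (((basF q hq0 hk).repr u i : AF q hq0 hk) : k) :=
  rhoF_spec q hq0 hk _

theorem EF_zero {i : BI q hq0 hk} {u : k}
    (h : (basF q hq0 hk).repr u i = 0) : EF q hq0 hk i u = 0 := by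
  refine powq_inj q hq0 hk ?_
  rw [EF_pow, h, zero_pow hq0]
  rfl

theorem EF_smul (i : BI q hq0 hk) (a u : k) :
    EF q hq0 hk i (a ^ q * u) = a * EF q hq0 hk i u := by
  refine powq_inj q hq0 hk ?_
  have hmem : a ^ q ∈ AF q hq0 hk := RingHom.mem_fieldRange.mpr ⟨a, rfl⟩
  have h1 : a ^ q * u = (⟨a ^ q, hmem⟩ : AF q hq0 hk) • u :=
    (Subring.smul_def (⟨a ^ q, hmem⟩ : AF q hq0 hk) u).symm
  rw [EF_pow, h1, map_smul, Finsupp.smul_apply, smul_eq_mul, mul_pow, EF_pow]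
  push_cast
  ring

theorem EF_recon (u : k) :
    ∑ i ∈ ((basF q hq0 hk).repr u).support,
      (EF q hq0 hk i u) ^ q * basF q hq0 hk i = u := by
  conv_rhs => rw [← (basF q hq0 hk).linearCombination_repr u]
  rw [Finsupp.linearCombination_apply, Finsupp.sum]
  refine Finset.sum_congr rfl fun i _ => ?_
  rw [EF_pow, Subring.smul_def, smul_eq_mul]

variable {τ : Type*} [DecidableEq τ]

/-- Componentwise division of exponents by `q`. -/
noncomputable def divq (A : τ →₀ ℕ) : τ →₀ ℕ :=
  A.mapRange (· / q) (Nat.zero_div q)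

/-- Componentwise remainder of exponents mod `q`. -/
noncomputable def modq (A : τ →₀ ℕ) : τ →₀ ℕ :=
  A.mapRange (· % q) (Nat.zero_mod q)

theorem modq_add_mul (C A : τ →₀ ℕ) : modq q (q • C + A) = modq q A := by
  ext t
  simp only [modq, Finsupp.mapRange_apply, Finsupp.add_apply, Finsupp.smul_apply,
    smul_eq_mul]
  exact Nat.mul_add_mod q (C t) (A t)

include hq0 in
theorem divq_add_mul (C A : τ →₀ ℕ) : divq q (q • C + A) = C + divq q A := by
  ext t
  simp only [divq, Finsupp.mapRange_apply, Finsupp.add_apply, Finsupp.smul_apply,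
    smul_eq_mul]
  exact Nat.mul_add_div (Nat.pos_of_ne_zero hq0) (C t) (A t)

theorem divq_modq_recon (A : τ →₀ ℕ) : q • divq q A + modq q A = A := by
  ext t
  simp only [divq, modq, Finsupp.mapRange_apply, Finsupp.add_apply, Finsupp.smul_apply,
    smul_eq_mul]
  exact Nat.div_add_mod (A t) q

/-- The coordinate Finsupp of a single monomial's coefficient. -/
noncomputable def hAF (A : τ →₀ ℕ) (u : k) :
    (BI q hq0 hk × (τ →₀ ℕ)) →₀ MvPolynomial τ k :=
  ∑ i ∈ ((basF q hq0 hk).repr u).support,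
    Finsupp.single (i, modq q A) (monomial (divq q A) (EF q hq0 hk i u))

theorem hAF_eq (A : τ →₀ ℕ) (u : k) (S : Finset (BI q hq0 hk))
    (hS : ((basF q hq0 hk).repr u).support ⊆ S) :
    hAF q hq0 hk A u =
      ∑ i ∈ S, Finsupp.single (i, modq q A)
        (monomial (divq q A) (EF q hq0 hk i u)) := by
  refine Finset.sum_subset hS fun i _ hi => ?_
  rw [EF_zero q hq0 hk (Finsupp.notMem_support_iff.mp hi)]
  simp

theorem hAF_zero (A : τ →₀ ℕ) : hAF q hq0 hk A (0 : k) = 0 := by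
  rw [hAF, map_zero]
  simp

theorem hAF_add (A : τ →₀ ℕ) (u v : k) :
    hAF q hq0 hk A (u + v) = hAF q hq0 hk A u + hAF q hq0 hk A v := by
  classical
  set S := ((basF q hq0 hk).repr u).support ∪ ((basF q hq0 hk).repr v).support ∪
    ((basF q hq0 hk).repr (u + v)).support with hSdef
  have hu : ((basF q hq0 hk).repr u).support ⊆ S :=
    Finset.subset_union_left.trans Finset.subset_union_left
  have hv : ((basF q hq0 hk).repr v).support ⊆ S :=
    Finset.subset_union_right.trans Finset.subset_union_left
  have huv : ((basF q hq0 hk).repr (u + v)).support ⊆ S :=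
    Finset.subset_union_right
  rw [hAF_eq q hq0 hk A u S hu, hAF_eq q hq0 hk A v S hv,
    hAF_eq q hq0 hk A (u + v) S huv, ← Finset.sum_add_distrib]
  refine Finset.sum_congr rfl fun i _ => ?_
  have : EF q hq0 hk i (u + v) = EF q hq0 hk i u + EF q hq0 hk i v := by
    refine powq_inj q hq0 hk ?_
    rw [hk, EF_pow, EF_pow, EF_pow, map_add, Finsupp.add_apply]
    push_cast
    ring
  rw [this, ← Finsupp.single_add, ← map_add]

/-- The coordinate Finsupp of a polynomial. -/
noncomputable def cFf (f : MvPolynomial τ k) :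
    (BI q hq0 hk × (τ →₀ ℕ)) →₀ MvPolynomial τ k :=
  ∑ A ∈ f.support, hAF q hq0 hk A (coeff A f)

theorem cFf_eq (f : MvPolynomial τ k) (Sf : Finset (τ →₀ ℕ))
    (hS : f.support ⊆ Sf) :
    cFf q hq0 hk f = ∑ A ∈ Sf, hAF q hq0 hk A (coeff A f) := by
  refine Finset.sum_subset hS fun A _ hA => ?_
  rw [MvPolynomial.notMem_support_iff.mp hA, hAF_zero]

theorem cFf_add (f g : MvPolynomial τ k) :
    cFf q hq0 hk (f + g) = cFf q hq0 hk f + cFf q hq0 hk g := by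
  classical
  set S := f.support ∪ g.support with hSdef
  have hf : f.support ⊆ S := Finset.subset_union_left
  have hg : g.support ⊆ S := Finset.subset_union_right
  have hfg : (f + g).support ⊆ S := MvPolynomial.support_add
  rw [cFf_eq q hq0 hk f S hf, cFf_eq q hq0 hk g S hg,
    cFf_eq q hq0 hk (f + g) S hfg, ← Finset.sum_add_distrib]
  refine Finset.sum_congr rfl fun A _ => ?_
  rw [coeff_add, hAF_add]

theorem cFf_monomial (A : τ →₀ ℕ) (u : k) :
    cFf q hq0 hk (monomial A u) = hAF q hq0 hk A u := by
  rw [cFf_eq q hq0 hk _ {A} MvPolynomial.support_monomial_subset,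
    Finset.sum_singleton]
  simp [coeff_monomial]

variable (hkR : ∀ x y : MvPolynomial τ k, (x + y) ^ q = x ^ q + y ^ q)

include hkR in
theorem cFf_smul (f g : MvPolynomial τ k) :
    cFf q hq0 hk (g ^ q * f) = g • cFf q hq0 hk f := by
  classical
  induction f using MvPolynomial.induction_on' generalizing g with
  | add f1 f2 ih1 ih2 =>
    rw [mul_add, cFf_add, ih1, ih2, cFf_add, smul_add]
  | monomial A u =>
    induction g using MvPolynomial.induction_on' with
    | add g1 g2 ihg1 ihg2 =>
      rw [hkR, add_mul, cFf_add, ihg1, ihg2, add_smul]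
    | monomial C a =>
      rw [monomial_pow, monomial_mul, cFf_monomial, cFf_monomial]
      set S := ((basF q hq0 hk).repr u).support ∪
        ((basF q hq0 hk).repr (a ^ q * u)).support with hSdef
      rw [hAF_eq q hq0 hk _ _ S Finset.subset_union_right,
        hAF_eq q hq0 hk A u S Finset.subset_union_left,
        Finset.smul_sum]
      refine Finset.sum_congr rfl fun i _ => ?_
      rw [Finsupp.smul_single, modq_add_mul, divq_add_mul q hq0, EF_smul,
        smul_eq_mul, monomial_mul]

/-- The basis elements: monomials with small exponents times field basis elements. -/
noncomputable def bF (t : BI q hq0 hk × (τ →₀ ℕ)) : MvPolynomial τ k :=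
  monomial t.2 (basF q hq0 hk t.1)

include hkR in
theorem cFf_recon (f : MvPolynomial τ k) :
    ((cFf q hq0 hk f).sum fun t r => r ^ q * bF q hq0 hk t) = f := by
  classical
  have h0 : ∀ t : BI q hq0 hk × (τ →₀ ℕ),
      (0 : MvPolynomial τ k) ^ q * bF q hq0 hk t = 0 := fun t => by
    rw [zero_pow hq0, zero_mul]
  have hadd : ∀ (t : BI q hq0 hk × (τ →₀ ℕ)) (r s : MvPolynomial τ k),
      (r + s) ^ q * bF q hq0 hk t = r ^ q * bF q hq0 hk t + s ^ q * bF q hq0 hk t :=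
    fun t r s => by rw [hkR, add_mul]
  induction f using MvPolynomial.induction_on' with
  | add f1 f2 ih1 ih2 =>
    rw [cFf_add, Finsupp.sum_add_index' h0 hadd, ih1, ih2]
  | monomial A u =>
    rw [cFf_monomial, hAF, ← Finsupp.sum_finset_sum_index h0 hadd]
    have : ∀ i ∈ ((basF q hq0 hk).repr u).support,
        ((Finsupp.single (i, modq q A)
            (monomial (divq q A) (EF q hq0 hk i u))).sum
          fun t r => r ^ q * bF q hq0 hk t) =
        monomial A ((EF q hq0 hk i u) ^ q * basF q hq0 hk i) := by
      intro i _
      rw [Finsupp.sum_single_index (h0 _)]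
      rw [bF, monomial_pow, monomial_mul, divq_modq_recon]
    rw [Finset.sum_congr rfl this, ← map_sum, EF_recon]

end Build

/-- In a polynomial ring over a field of characteristic `p > 0`, Frobenius
powers distribute over intersections: `(I ∩ J)^{[q]} = I^{[q]} ∩ J^{[q]}`. -/
theorem stmt9 (k : Type*) [Field k] (p : ℕ) (hp : p.Prime) [CharP k p]
    (e : ℕ) (he : 1 ≤ e) (q : ℕ) (hq : q = p ^ e) (n : ℕ)
    (I J : Ideal (MvPolynomial (Fin (n + 1)) k)) :
    frobeniusPower q (I ⊓ J) = frobeniusPower q I ⊓ frobeniusPower q J := by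
  haveI : Fact p.Prime := ⟨hp⟩
  have hq0 : q ≠ 0 := by rw [hq]; exact (pow_pos hp.pos e).ne'
  have hk : ∀ x y : k, (x + y) ^ q = x ^ q + y ^ q := fun x y => by
    rw [hq]; exact add_pow_char_pow x y p e
  have hkR : ∀ x y : MvPolynomial (Fin (n + 1)) k,
      (x + y) ^ q = x ^ q + y ^ q := fun x y => by
    rw [hq]; exact add_pow_char_pow x y p e
  exact frob_inf_of_dual q (bF q hq0 hk)
    (AddMonoidHom.mk' (cFf q hq0 hk) (cFf_add q hq0 hk))
    (fun g f => cFf_smul q hq0 hk hkR f g)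
    (cFf_recon q hq0 hk hkR) I J
end

section
/- Let I be the ideal of a finite set of distinct points p_1,...,p_s in projective n-space over a field of characteristic p > 0, and let r be a power of p. Then the symbolic power satisfies I^{(rn)} ⊆ I^r. -/
open MvPolynomial

/-- The homogeneous ideal of a point of `ℙⁿ` with homogeneous coordinate vector
`v`: the ideal generated by the linear forms vanishing at `v`. -/
noncomputable def pointIdeal {k : Type*} [Field k] {n : ℕ} (v : Fin (n + 1) → k) :
    Ideal (MvPolynomial (Fin (n + 1)) k) :=
  Ideal.span { f | ∃ a : Fin (n + 1) → k,
    (∑ j, a j * v j) = 0 ∧ f = ∑ j, MvPolynomial.C (a j) * MvPolynomial.X j }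

namespace Stmt10Aux

set_option linter.unusedSectionVars false
set_option linter.unusedVariables false

section Abstract



variable {R : Type*} [CommRing R]

lemma comp_mem_of_mem_map (ρ : R →+* R) (π : R →+ R)
    (hπ : ∀ h g : R, π (ρ h * g) = h * π g) {J : Ideal R} {f : R}
    (hf : f ∈ Ideal.map ρ J) : π f ∈ J := by
  rw [Ideal.map] at hf
  obtain ⟨c, hsupp, rfl⟩ := Submodule.mem_span_set.mp hf
  rw [Finsupp.sum, map_sum]
  refine Ideal.sum_mem _ fun x hx => ?_
  obtain ⟨h, hhJ, rfl⟩ := hsupp hx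
  rw [smul_eq_mul, mul_comm, hπ]
  exact Ideal.mul_mem_right _ _ hhJ

lemma iInf_map_le_map_iInf {ι κ : Type*} (ρ : R →+* R) (π : ι → R →+ R) (s : ι → R)
    (hπ : ∀ i (h g : R), π i (ρ h * g) = h * π i g)
    (hrec : ∀ f : R, ∃ T : Finset ι, f = ∑ i ∈ T, s i * ρ (π i f))
    (J : κ → Ideal R) :
    (⨅ l, Ideal.map ρ (J l)) ≤ Ideal.map ρ (⨅ l, J l) := by
  intro f hf
  obtain ⟨T, hT⟩ := hrec f
  rw [hT]
  refine Ideal.sum_mem _ fun i _ => Ideal.mul_mem_left _ _ (Ideal.mem_map_of_mem _ ?_)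
  rw [Ideal.mem_iInf]
  exact fun l => comp_mem_of_mem_map ρ (π i) (hπ i) (Ideal.mem_iInf.mp hf l)


end Abstract

section Psi


variable {k : Type*} [CommRing k] {σ : Type*} [Fintype σ]

lemma injAux {q : ℕ} (hq : 0 < q) (d : σ →₀ ℕ) :
    Function.Injective fun m : σ →₀ ℕ => q • m + d := by
  intro m1 m2 h
  have h' : q • m1 = q • m2 := by simpa using h
  ext j
  have := DFunLike.congr_fun h' j
  simp only [Finsupp.smul_apply, smul_eq_mul] at this
  exact Nat.eq_of_mul_eq_mul_left hq this

omit [Fintype σ] in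
lemma smul_inj {q : ℕ} (hq : 0 < q) {m1 m2 : σ →₀ ℕ} (h : q • m1 = q • m2) : m1 = m2 := by
  ext j
  have := DFunLike.congr_fun h j
  simp only [Finsupp.smul_apply, smul_eq_mul] at this
  exact Nat.eq_of_mul_eq_mul_left hq this

noncomputable def compPsi {q : ℕ} (hq : 0 < q) (d : σ →₀ ℕ) :
    MvPolynomial σ k →+ MvPolynomial σ k :=
  AddMonoidAlgebra.coeffAddEquiv.symm.toAddMonoidHom.comp
    ((Finsupp.comapDomain.addMonoidHom (injAux hq d)).comp
      AddMonoidAlgebra.coeffAddEquiv.toAddMonoidHom)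

lemma coeff_compPsi {q : ℕ} (hq : 0 < q) (d : σ →₀ ℕ) (f : MvPolynomial σ k) (m : σ →₀ ℕ) :
    coeff m (compPsi hq d f) = coeff (q • m + d) f := rfl

omit [Fintype σ] in
lemma expand_monomial' {q : ℕ} (hq : 0 < q) (b : σ →₀ ℕ) (c : k) :
    expand q (monomial b c) = monomial (q • b) c := by
  rw [expand_monomial]

omit [Fintype σ] in
lemma coeff_expand_smul {q : ℕ} (hq : 0 < q) (u : σ →₀ ℕ) (f : MvPolynomial σ k) :
    coeff (q • u) (expand q f) = coeff u f := by
  classical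
  induction f using MvPolynomial.induction_on' with
  | monomial b c =>
    rw [expand_monomial' hq, coeff_monomial, coeff_monomial]
    by_cases h : b = u
    · simp [h]
    · rw [if_neg (fun hc => h (smul_inj hq hc)), if_neg h]
  | add p1 p2 hp1 hp2 => simp [map_add, coeff_add, hp1, hp2]

omit [Fintype σ] in
lemma coeff_expand_eq_zero {q : ℕ} (hq : 0 < q) (m : σ →₀ ℕ) (f : MvPolynomial σ k)
    (h : ¬ ∃ u, m = q • u) : coeff m (expand q f) = 0 := by
  classical
  induction f using MvPolynomial.induction_on' with
  | monomial b c =>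
    rw [expand_monomial' hq, coeff_monomial, if_neg]
    exact fun hc => h ⟨b, hc.symm⟩
  | add p1 p2 hp1 hp2 => simp [map_add, coeff_add, hp1, hp2]

lemma compPsi_semilinear {q : ℕ} (hq : 0 < q) (d : σ →₀ ℕ) (hd : ∀ j, d j < q)
    (h g : MvPolynomial σ k) :
    compPsi hq d (expand q h * g) = h * compPsi hq d g := by
  induction h using MvPolynomial.induction_on' with
  | monomial b c =>
    ext m
    rw [coeff_compPsi, expand_monomial' hq, mul_comm ((monomial (q • b)) c) g,
      coeff_mul_monomial', mul_comm ((monomial b) c) (compPsi hq d g), coeff_mul_monomial']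
    have hcond : q • b ≤ q • m + d ↔ b ≤ m := by
      constructor
      · intro hle
        rw [Finsupp.le_def] at hle ⊢
        intro j
        have := hle j
        simp only [Finsupp.smul_apply, Finsupp.add_apply, smul_eq_mul] at this
        have hdj := hd j
        by_contra hc
        push_neg at hc
        nlinarith
      · intro hle
        rw [Finsupp.le_def] at hle ⊢
        intro j
        have := hle j
        simp only [Finsupp.smul_apply, Finsupp.add_apply, smul_eq_mul]
        nlinarith
    by_cases hbm : b ≤ m
    · rw [if_pos (hcond.mpr hbm), if_pos hbm, coeff_compPsi]
      congr 2
      ext j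
      have h1 : b j ≤ m j := Finsupp.le_def.mp hbm j
      simp only [Finsupp.tsub_apply, Finsupp.add_apply, Finsupp.smul_apply, smul_eq_mul]
      obtain ⟨t, ht⟩ : ∃ t, m j = b j + t := ⟨m j - b j, by omega⟩
      rw [ht, Nat.add_sub_cancel_left, Nat.mul_add, Nat.add_assoc, Nat.add_sub_cancel_left]
    · rw [if_neg (fun hc => hbm (hcond.mp hc)), if_neg hbm]
  | add p1 p2 hp1 hp2 => rw [map_add, add_mul, map_add, hp1, hp2, add_mul]


variable [DecidableEq σ]

/-- reconstruction -/
lemma psi_reconstruct {q : ℕ} (hq : 0 < q) (f : MvPolynomial σ k) :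
    f = ∑ a : σ → Fin q, monomial (Finsupp.equivFunOnFinite.symm fun j => ((a j : ℕ))) 1 *
        expand q (compPsi hq (Finsupp.equivFunOnFinite.symm fun j => ((a j : ℕ))) f) := by
  classical
  ext m
  rw [coeff_sum]
  set a₀ : σ → Fin q := fun j => ⟨m j % q, Nat.mod_lt _ hq⟩ with ha₀
  rw [Finset.sum_eq_single a₀]
  · set d₀ : σ →₀ ℕ := Finsupp.equivFunOnFinite.symm fun j => ((a₀ j : ℕ)) with hd₀
    set u₀ : σ →₀ ℕ := Finsupp.equivFunOnFinite.symm fun j => m j / q with hu₀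
    have hle : d₀ ≤ m := by
      rw [Finsupp.le_def]
      intro j
      exact Nat.mod_le _ _
    have hsub : m - d₀ = q • u₀ := by
      ext j
      simp only [Finsupp.tsub_apply, Finsupp.smul_apply, smul_eq_mul]
      have h1 : (d₀ : σ →₀ ℕ) j = m j % q := rfl
      have h2 : (u₀ : σ →₀ ℕ) j = m j / q := rfl
      rw [h1, h2]
      have := Nat.div_add_mod (m j) q
      omega
    rw [mul_comm, coeff_mul_monomial', if_pos hle, hsub, coeff_expand_smul hq,
      coeff_compPsi, mul_one]
    congr 1
    ext j
    have h2 : (u₀ : σ →₀ ℕ) j = m j / q := rfl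
    simp only [Finsupp.add_apply, Finsupp.smul_apply, smul_eq_mul, h2]
    have h1 : (d₀ : σ →₀ ℕ) j = m j % q := rfl
    rw [h1]
    have := Nat.div_add_mod (m j) q
    omega
  · intro a _ hne
    rw [mul_comm, coeff_mul_monomial']
    set da : σ →₀ ℕ := Finsupp.equivFunOnFinite.symm fun j => ((a j : ℕ)) with hda
    split_ifs with hle
    · rw [coeff_expand_eq_zero hq _ _ ?_, zero_mul]
      rintro ⟨u, hu⟩
      apply hne
      funext j
      have h1 : m j - (a j : ℕ) = q * u j := by
        have := DFunLike.congr_fun hu j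
        simpa [Finsupp.tsub_apply, hda] using this
      have h2 : (a j : ℕ) ≤ m j := Finsupp.le_def.mp hle j
      have h3 : m j = (a j : ℕ) + q * u j := by omega
      have h4 : m j % q = (a j : ℕ) := by
        rw [h3, Nat.add_mul_mod_self_left, Nat.mod_eq_of_lt (a j).isLt]
      exact Fin.ext (by simp [ha₀, h4])
    · rfl
  · intro h
    exact absurd (Finset.mem_univ a₀) h


end Psi

section TwistSec


/-- `k` with module structure over `k` twisted by `σk`. -/
def Twist (k : Type*) [CommRing k] (σk : k →+* k) : Type _ := k

instance {k : Type*} [CommRing k] (σk : k →+* k) : AddCommGroup (Twist k σk) :=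
  inferInstanceAs (AddCommGroup k)

noncomputable instance {k : Type*} [CommRing k] (σk : k →+* k) : Module k (Twist k σk) :=
  Module.compHom k σk

/-- identity map out of the twist -/
def untwist {k : Type*} [CommRing k] {σk : k →+* k} (x : Twist k σk) : k := x

/-- identity map into the twist -/
def totwist {k : Type*} [CommRing k] {σk : k →+* k} (x : k) : Twist k σk := x

section E

variable {k : Type*} [Field k] (σk : k →+* k) {σ : Type*}

noncomputable def kBasis := Module.Basis.ofVectorSpace k (Twist k σk)

noncomputable def tE (β : Module.Basis.ofVectorSpaceIndex k (Twist k σk)) : k →+ k where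
  toFun c := (kBasis σk).repr (totwist c) β
  map_zero' := by
    show ((kBasis σk).repr (totwist (0 : k))) β = 0
    rw [show totwist (σk := σk) (0 : k) = 0 from rfl, map_zero]
    rfl
  map_add' x y := by
    show ((kBasis σk).repr (totwist (x + y))) β = _
    rw [show totwist (σk := σk) (x + y) = totwist x + totwist y from rfl, map_add]
    rfl

lemma tE_apply (β) (c : k) : tE σk β c = (kBasis σk).repr (totwist c) β := rfl

lemma tE_semilinear (β : Module.Basis.ofVectorSpaceIndex k (Twist k σk)) (c x : k) :
    tE σk β (σk c * x) = c * tE σk β x := by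
  have h1 : totwist (σk := σk) (σk c * x) = c • totwist x := rfl
  rw [tE_apply, h1, map_smul]
  rfl

noncomputable def EMap (β : Module.Basis.ofVectorSpaceIndex k (Twist k σk)) :
    MvPolynomial σ k →+ MvPolynomial σ k :=
  AddMonoidAlgebra.coeffAddEquiv.symm.toAddMonoidHom.comp
    ((Finsupp.mapRange.addMonoidHom (tE σk β)).comp
      AddMonoidAlgebra.coeffAddEquiv.toAddMonoidHom)

lemma coeff_EMap (β) (f : MvPolynomial σ k) (m : σ →₀ ℕ) :
    coeff m (EMap σk β f) = tE σk β (coeff m f) := rfl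

lemma EMap_semilinear (β) (h g : MvPolynomial σ k) :
    EMap σk β (MvPolynomial.map σk h * g) = h * EMap σk β g := by
  induction h using MvPolynomial.induction_on' with
  | monomial b c =>
    ext m
    rw [coeff_EMap, map_monomial, mul_comm _ g, coeff_mul_monomial',
      mul_comm ((monomial b) c) (EMap σk β g), coeff_mul_monomial']
    split_ifs with hbm
    · rw [mul_comm _ (σk c), tE_semilinear, coeff_EMap, mul_comm]
    · exact map_zero _
  | add p1 p2 hp1 hp2 => rw [map_add, add_mul, map_add, hp1, hp2, add_mul]

/-- scalar-level reconstruction -/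
lemma scalar_reconstruct (c : k) :
    c = ∑ β ∈ ((kBasis σk).repr (totwist c)).support,
      σk ((kBasis σk).repr (totwist c) β) * untwist ((kBasis σk) β) := by
  have h := (kBasis σk).linearCombination_repr (totwist c)
  rw [Finsupp.linearCombination_apply, Finsupp.sum] at h
  calc c = untwist (totwist (σk := σk) c) := rfl
    _ = untwist (∑ β ∈ ((kBasis σk).repr (totwist c)).support,
          (kBasis σk).repr (totwist c) β • (kBasis σk) β) := by rw [h]
    _ = _ := rfl

lemma E_reconstruct (f : MvPolynomial σ k) :
    ∃ T : Finset (Module.Basis.ofVectorSpaceIndex k (Twist k σk)),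
      f = ∑ β ∈ T, C (untwist ((kBasis σk) β)) * MvPolynomial.map σk (EMap σk β f) := by
  classical
  refine ⟨f.support.biUnion fun m => ((kBasis σk).repr (totwist (coeff m f))).support, ?_⟩
  ext m
  rw [coeff_sum]
  have hterm : ∀ β, coeff m (C (untwist ((kBasis σk) β)) * MvPolynomial.map σk (EMap σk β f))
      = σk ((kBasis σk).repr (totwist (coeff m f)) β) * untwist ((kBasis σk) β) := by
    intro β
    rw [coeff_C_mul, coeff_map, coeff_EMap, mul_comm, tE_apply]
  simp only [hterm]
  conv_lhs => rw [scalar_reconstruct σk (coeff m f)]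
  refine Finset.sum_subset ?_ ?_
  · intro β hβ
    refine Finset.mem_biUnion.mpr ⟨m, ?_, hβ⟩
    rw [mem_support_iff]
    intro hc
    rw [show totwist (σk := σk) (coeff m f) = 0 by rw [hc]; rfl, map_zero] at hβ
    simp at hβ
  · intro β _ hβ
    rw [Finsupp.notMem_support_iff.mp hβ, map_zero, zero_mul]

end E

end TwistSec

section Pigeon


variable {R : Type*} [CommRing R]

lemma pow_le_span_pow {ι : Type*} [Fintype ι] (g : ι → R) {r : ℕ} (hr : 0 < r)
    {m : ℕ} (hm : (r - 1) * Fintype.card ι < m) :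
    (Ideal.span (Set.range g)) ^ m ≤ Ideal.span (Set.range fun i => g i ^ r) := by
  classical
  set K := Ideal.span (Set.range fun i => g i ^ r) with hK
  set MM : ℕ → Ideal R := fun m => Ideal.span
    {x | ∃ a : ι → ℕ, (∀ i, a i < r) ∧ (∑ i, a i) = m ∧ x = ∏ i, g i ^ a i} with hMM
  have key : ∀ m, (Ideal.span (Set.range g)) ^ m ≤ K ⊔ MM m := by
    intro m
    induction m with
    | zero =>
      have h1 : (1 : R) ∈ MM 0 := Ideal.subset_span
        ⟨fun _ => 0, fun _ => hr, by simp, by simp⟩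
      rw [pow_zero]
      intro x _
      have hx : x ∈ MM 0 := by simpa using Ideal.mul_mem_left _ x h1
      exact Submodule.mem_sup_right hx
    | succ m ih =>
      rw [pow_succ]
      calc Ideal.span (Set.range g) ^ m * Ideal.span (Set.range g)
          ≤ (K ⊔ MM m) * Ideal.span (Set.range g) := Ideal.mul_mono_left ih
        _ = K * Ideal.span (Set.range g) ⊔ MM m * Ideal.span (Set.range g) := by
            rw [Submodule.sup_mul]
        _ ≤ K ⊔ MM (m + 1) := by
            refine sup_le (le_trans Ideal.mul_le_left le_sup_left) ?_
            conv_lhs => rw [hMM]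
            rw [Ideal.span_mul_span', Ideal.span_le]
            rintro x ⟨y, ⟨a, ha1, ha2, rfl⟩, z, ⟨i, rfl⟩, rfl⟩
            dsimp only
            by_cases hcase : a i + 1 < r
            · refine Submodule.mem_sup_right (Ideal.subset_span ?_)
              have hupd : Function.update a i (a i + 1) = fun j => a j + if j = i then 1 else 0 := by
                funext j
                by_cases hj : j = i
                · subst hj; simp
                · simp [Function.update_of_ne hj, hj]
              refine ⟨Function.update a i (a i + 1), ?_, ?_, ?_⟩
              · intro j
                by_cases hj : j = i
                · subst hj; simpa using hcase
                · rw [Function.update_of_ne hj]; exact ha1 j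
              · rw [hupd, Finset.sum_add_distrib, ha2,
                  Finset.sum_ite_eq' Finset.univ i fun _ => 1]
                simp
              · rw [hupd]
                rw [show (∏ j, g j ^ (a j + if j = i then 1 else 0))
                    = (∏ j, g j ^ a j) * ∏ j, g j ^ (if j = i then 1 else 0) by
                  rw [← Finset.prod_mul_distrib]
                  exact Finset.prod_congr rfl fun j _ => pow_add _ _ _]
                congr 1
                rw [show (fun j => g j ^ (if j = i then 1 else 0))
                    = fun j => if j = i then g j else 1 by
                  funext j; by_cases hj : j = i <;> simp [hj]]
                rw [Finset.prod_ite_eq' Finset.univ i g, if_pos (Finset.mem_univ i)]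
            · have hai : a i + 1 = r := by have := ha1 i; omega
              refine Submodule.mem_sup_left ?_
              have hx : (∏ j, g j ^ a j) * g i
                  = g i ^ r * ∏ j ∈ Finset.univ.erase i, g j ^ a j := by
                rw [← Finset.mul_prod_erase Finset.univ (fun j => g j ^ a j)
                  (Finset.mem_univ i), ← hai]
                ring
              rw [hx]
              exact Ideal.mul_mem_right _ _ (Ideal.subset_span ⟨i, rfl⟩)
  have hempty : MM m = ⊥ := by
    have hset : {x : R | ∃ a : ι → ℕ, (∀ i, a i < r) ∧ (∑ i, a i) = m ∧ x = ∏ i, g i ^ a i}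
        = ∅ := by
      ext x
      simp only [Set.mem_setOf_eq, Set.mem_empty_iff_false, iff_false]
      rintro ⟨a, ha1, ha2, -⟩
      have hle : ∑ i, a i ≤ ∑ _i : ι, (r - 1) :=
        Finset.sum_le_sum fun i _ => by have := ha1 i; omega
      rw [Finset.sum_const, smul_eq_mul, Finset.card_univ, Nat.mul_comm] at hle
      omega
    rw [hMM]
    simp only [hset, Ideal.span_empty]
  refine (key m).trans ?_
  rw [hempty, sup_bot_eq]


end Pigeon

section Point
lemma pointIdeal_eq {k : Type*} [Field k] {n : ℕ} (v : Fin (n + 1) → k) (j₀ : Fin (n + 1))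
    (h₀ : v j₀ ≠ 0) :
    pointIdeal v = Ideal.span (Set.range fun j =>
      (C (v j₀) * X j - C (v j) * X j₀ : MvPolynomial (Fin (n + 1)) k)) := by
  classical
  apply le_antisymm
  · rw [pointIdeal, Ideal.span_le]
    rintro x ⟨a, ha, rfl⟩
    have hterm : ∀ j : Fin (n + 1),
        C (a j * (v j₀)⁻¹) * (C (v j₀) * X j - C (v j) * X j₀)
          = C (a j * (v j₀)⁻¹ * v j₀) * X j - C (a j * (v j₀)⁻¹ * v j) *
            (X j₀ : MvPolynomial (Fin (n + 1)) k) := by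
      intro j
      rw [mul_sub, ← mul_assoc, ← mul_assoc, ← map_mul, ← map_mul]
    have hid : (∑ j, C (a j) * X j : MvPolynomial (Fin (n + 1)) k)
        = ∑ j, C (a j * (v j₀)⁻¹) * (C (v j₀) * X j - C (v j) * X j₀) := by
      rw [Finset.sum_congr rfl fun j _ => hterm j, Finset.sum_sub_distrib]
      have h1 : ∀ j : Fin (n+1), a j * (v j₀)⁻¹ * v j₀ = a j := by
        intro j
        rw [mul_assoc, inv_mul_cancel₀ h₀, mul_one]
      simp only [h1]
      have h2 : (∑ j, C (a j * (v j₀)⁻¹ * v j) * X j₀ : MvPolynomial (Fin (n + 1)) k)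
          = C ((∑ j, a j * v j) * (v j₀)⁻¹) * X j₀ := by
        rw [← Finset.sum_mul, ← map_sum, Finset.sum_mul]
        congr 2
        exact Finset.sum_congr rfl fun j _ => by ring
      rw [h2, ha, zero_mul, map_zero, zero_mul, sub_zero]
    rw [hid]
    exact Ideal.sum_mem _ fun j _ =>
      Ideal.mul_mem_left _ _ (Ideal.subset_span ⟨j, rfl⟩)
  · rw [Ideal.span_le]
    rintro x ⟨j, rfl⟩
    refine Ideal.subset_span ⟨fun l => (if l = j then v j₀ else 0) - (if l = j₀ then v j else 0),
      ?_, ?_⟩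
    · simp only [sub_mul, ite_mul, zero_mul, Finset.sum_sub_distrib,
        Finset.sum_ite_eq' Finset.univ, Finset.mem_univ, if_true]
      ring
    · simp only [map_sub, sub_mul, Finset.sum_sub_distrib, apply_ite C, map_zero, ite_mul,
        zero_mul, Finset.sum_ite_eq' Finset.univ, Finset.mem_univ, if_true]


end Point

end Stmt10Aux
/-- Let `I` be the ideal of a finite set of distinct points of `ℙⁿ` over a field
of characteristic `p > 0`, and let `r` be a power of `p`.  Then the symbolic
power `I^{(rn)} = ⋂ᵢ I(pᵢ)^{rn}` is contained in `I^r`. -/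
theorem stmt10 (k : Type*) [Field k] (p : ℕ) (hp : p.Prime) [CharP k p]
    (n s : ℕ) (hn : 1 ≤ n) (hs : 1 ≤ s)
    (pt : Fin s → (Fin (n + 1) → k)) (hpt : ∀ i, pt i ≠ 0)
    (hdist : ∀ i j : Fin s, i ≠ j → ∀ c : k, c • pt j ≠ pt i)
    (e : ℕ) (he : 1 ≤ e) (r : ℕ) (hr : r = p ^ e) :
    (⨅ i, (pointIdeal (pt i)) ^ (r * n)) ≤ (⨅ i, pointIdeal (pt i)) ^ r := by
  classical
  open Stmt10Aux in
  haveI : Fact p.Prime := ⟨hp⟩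
  subst hr
  set q := p ^ e with hqdef
  have hq : 0 < q := pow_pos hp.pos e
  set R := MvPolynomial (Fin (n + 1)) k with hR
  let σk : k →+* k := iterateFrobenius k p e
  let ψ : R →+* R := (MvPolynomial.expand q (σ := Fin (n + 1)) (R := k) : _ →ₐ[k] _).toRingHom
  let φ : R →+* R := MvPolynomial.map σk
  have hcomp : ∀ x : R, ψ (φ x) = x ^ q := by
    have hhom : ψ.comp φ = iterateFrobenius R p e := by
      apply MvPolynomial.ringHom_ext
      · intro a
        show ψ (φ (C a)) = _
        rw [show φ (C a) = C (σk a) from MvPolynomial.map_C σk a]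
        show MvPolynomial.expand q (C (σk a)) = _
        rw [MvPolynomial.expand_C]
        show C (σk a) = (C a : R) ^ p ^ e
        rw [show σk a = a ^ p ^ e from rfl, map_pow]
      · intro i
        show ψ (φ (X i)) = _
        rw [show φ (X i) = X i from MvPolynomial.map_X (f := σk) i]
        show MvPolynomial.expand q (X i) = _
        rw [MvPolynomial.expand_X, iterateFrobenius_def]
    intro x
    have := DFunLike.congr_fun hhom x
    rw [RingHom.comp_apply] at this
    rw [this, iterateFrobenius_def]
  intro f hf
  have step1 : ∀ i, f ∈ Ideal.map ψ (Ideal.map φ (pointIdeal (pt i))) := by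
    intro i
    have hmem : f ∈ (pointIdeal (pt i)) ^ (q * n) := Ideal.mem_iInf.mp hf i
    obtain ⟨j₀, h₀⟩ : ∃ j, pt i j ≠ 0 := Function.ne_iff.mp (hpt i)
    set v := pt i with hv
    set ℓ : Fin (n + 1) → R := fun j => C (v j₀) * X j - C (v j) * X j₀ with hℓ
    have hJ : pointIdeal v = Ideal.span (Set.range ℓ) := pointIdeal_eq v j₀ h₀
    set ℓ' : {j : Fin (n + 1) // j ≠ j₀} → R := fun j => ℓ j.1 with hℓ'
    have hJ' : Ideal.span (Set.range ℓ) = Ideal.span (Set.range ℓ') := by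
      apply le_antisymm
      · rw [Ideal.span_le]
        rintro x ⟨j, rfl⟩
        by_cases hj : j = j₀
        · subst hj
          have hz : ℓ j = 0 := by rw [hℓ]; exact sub_self _
          rw [hz]
          exact Submodule.zero_mem _
        · exact Ideal.subset_span ⟨⟨j, hj⟩, rfl⟩
      · rw [Ideal.span_le]
        rintro x ⟨j, rfl⟩
        exact Ideal.subset_span ⟨j.1, rfl⟩
    have hcard : Fintype.card {j : Fin (n + 1) // j ≠ j₀} = n := by
      have h1 := Fintype.card_subtype_compl (fun j : Fin (n + 1) => j = j₀)
      have h2 : Fintype.card {j : Fin (n + 1) // j = j₀} = 1 := Fintype.card_subtype_eq j₀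
      simp only [Fintype.card_fin] at h1
      rw [h2] at h1
      simpa using h1
    have hpig : (Ideal.span (Set.range ℓ')) ^ (q * n)
        ≤ Ideal.span (Set.range fun j => ℓ' j ^ q) := by
      apply pow_le_span_pow _ hq
      rw [hcard]
      have h1 : n ≤ q * n := Nat.le_mul_of_pos_left n hq
      have h2 : (q - 1) * n = q * n - n := by rw [Nat.sub_one_mul]
      omega
    have hfin : Ideal.span (Set.range fun j => ℓ' j ^ q)
        ≤ Ideal.map ψ (Ideal.map φ (pointIdeal v)) := by
      rw [Ideal.span_le]
      rintro x ⟨j, rfl⟩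
      have hmem' : ℓ' j ∈ pointIdeal v := by
        rw [hJ]
        exact Ideal.subset_span ⟨j.1, rfl⟩
      have hpow : ℓ' j ^ q = ψ (φ (ℓ' j)) := (hcomp _).symm
      have : ψ (φ (ℓ' j)) ∈ Ideal.map ψ (Ideal.map φ (pointIdeal v)) :=
        Ideal.mem_map_of_mem ψ (Ideal.mem_map_of_mem φ hmem')
      dsimp only
      rw [SetLike.mem_coe, hpow]
      exact this
    exact hfin (hpig (by rw [← hJ', ← hJ]; exact hmem))
  have step2 : f ∈ Ideal.map ψ (⨅ i, Ideal.map φ (pointIdeal (pt i))) := by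
    refine iInf_map_le_map_iInf ψ
      (fun a : Fin (n + 1) → Fin q =>
        compPsi hq (Finsupp.equivFunOnFinite.symm fun j => ((a j : ℕ))))
      (fun a => monomial (Finsupp.equivFunOnFinite.symm fun j => ((a j : ℕ))) 1)
      (fun a h g => compPsi_semilinear hq _ (fun j => by
        simpa using (a j).isLt) h g)
      (fun f => ⟨Finset.univ, psi_reconstruct hq f⟩) _ ?_
    exact Ideal.mem_iInf.mpr step1
  have step3 : f ∈ Ideal.map ψ (Ideal.map φ (⨅ i, pointIdeal (pt i))) := by
    refine Ideal.map_mono ?_ step2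
    exact iInf_map_le_map_iInf φ (fun β => EMap σk β)
      (fun β => C (untwist ((kBasis σk) β)))
      (fun β h g => EMap_semilinear σk β h g)
      (fun f => E_reconstruct σk f) _
  rw [Ideal.map_map] at step3
  have hfinal : Ideal.map (ψ.comp φ) (⨅ i, pointIdeal (pt i))
      ≤ (⨅ i, pointIdeal (pt i)) ^ q := by
    rw [Ideal.map_le_iff_le_comap]
    intro x hx
    rw [Ideal.mem_comap, RingHom.comp_apply, hcomp]
    exact Ideal.pow_mem_pow hx q
  exact hfinal step3
end
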